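/- Let a ≠ 0 be a real wave number, m ≠ 0, and k² = a². Suppose U, W : [−1,1] → ℂ are smooth, satisfy W = 2m(U'' − k²U), U = 2m(W'' − k²W), and iaU + W' = 0, with U(±1) = W(±1) = W'(±1) = 0. Then U ≡ 0 and W ≡ 0. -/

import Mathlib

theorem spanwise_branch_trivial
    (U W : ℝ → ℂ) (a m k : ℝ)
    (ha : a ≠ 0) (hm : m ≠ 0) (hk : k ^ 2 = a ^ 2)
    (hU : ContDiff ℝ (⊤ : ℕ∞) U) (hW : ContDiff ℝ (⊤ : ℕ∞) W)
    (heq1 : ∀ z ∈ Set.Icc (-1 : ℝ) 1,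
      W z = 2 * (m : ℂ) * (iteratedDeriv 2 U z - (k : ℂ) ^ 2 * U z))
    (heq2 : ∀ z ∈ Set.Icc (-1 : ℝ) 1,
      U z = 2 * (m : ℂ) * (iteratedDeriv 2 W z - (k : ℂ) ^ 2 * W z))
    (hsol : ∀ z ∈ Set.Icc (-1 : ℝ) 1,
      Complex.I * (a : ℂ) * U z + deriv W z = 0)
    (hbc : U 1 = 0 ∧ U (-1) = 0 ∧ W 1 = 0 ∧ W (-1) = 0 ∧
      deriv W 1 = 0 ∧ deriv W (-1) = 0) :
    ∀ z ∈ Set.Icc (-1 : ℝ) 1, U z = 0 ∧ W z = 0 := by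
  open scoped ContDiff in
  have hit : ∀ f : ℝ → ℂ, iteratedDeriv 2 f = deriv (deriv f) := by
    intro f
    rw [iteratedDeriv_succ, iteratedDeriv_one]
  rw [hit] at heq1 heq2
  set W1 := deriv W with hW1def
  set W2 := deriv W1 with hW2def
  set W3 := deriv W2 with hW3def
  set U1 := deriv U with hU1def
  set U2 := deriv U1 with hU2def
  have hk' : (k : ℂ) ^ 2 = (a : ℂ) ^ 2 := by exact_mod_cast congrArg (Complex.ofReal) hk
  -- differentiability
  have hWinf : ContDiff ℝ ((⊤ : ℕ∞) : WithTop ℕ∞) W := hW.of_le (by simp)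
  have hUinf : ContDiff ℝ ((⊤ : ℕ∞) : WithTop ℕ∞) U := hU.of_le (by simp)
  have hWc1 : ContDiff ℝ ((⊤ : ℕ∞) : WithTop ℕ∞) W1 := (contDiff_infty_iff_deriv (𝕜 := ℝ).mp hWinf).2
  have hWc2 : ContDiff ℝ ((⊤ : ℕ∞) : WithTop ℕ∞) W2 := (contDiff_infty_iff_deriv (𝕜 := ℝ).mp hWc1).2
  have hUc1 : ContDiff ℝ ((⊤ : ℕ∞) : WithTop ℕ∞) U1 := (contDiff_infty_iff_deriv (𝕜 := ℝ).mp hUinf).2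
  have hWd : ∀ x : ℝ, HasDerivAt W (W1 x) x := fun x => ((contDiff_infty_iff_deriv (𝕜 := ℝ).mp hWinf).1 x).hasDerivAt
  have hW1d : ∀ x : ℝ, HasDerivAt W1 (W2 x) x := fun x => ((contDiff_infty_iff_deriv (𝕜 := ℝ).mp hWc1).1 x).hasDerivAt
  have hW2d : ∀ x : ℝ, HasDerivAt W2 (W3 x) x := fun x => ((contDiff_infty_iff_deriv (𝕜 := ℝ).mp hWc2).1 x).hasDerivAt
  have hUd : ∀ x : ℝ, HasDerivAt U (U1 x) x := fun x => ((contDiff_infty_iff_deriv (𝕜 := ℝ).mp hUinf).1 x).hasDerivAt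
  have hU1d : ∀ x : ℝ, HasDerivAt U1 (U2 x) x := fun x => ((contDiff_infty_iff_deriv (𝕜 := ℝ).mp hUc1).1 x).hasDerivAt
  have hIooIcc : Set.Ioo (-1 : ℝ) 1 ⊆ Set.Icc (-1 : ℝ) 1 := Set.Ioo_subset_Icc_self
  have derivIoo : ∀ (f g : ℝ → ℂ), (∀ z ∈ Set.Ioo (-1 : ℝ) 1, f z = g z) →
      ∀ x ∈ Set.Ioo (-1 : ℝ) 1, deriv f x = deriv g x := by
    intro f g h x hx
    exact Filter.EventuallyEq.deriv_eq (Filter.eventually_of_mem (isOpen_Ioo.mem_nhds hx) h)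
  -- differentiate hsol once
  have h5 : ∀ x ∈ Set.Ioo (-1 : ℝ) 1, Complex.I * (a : ℂ) * U1 x + W2 x = 0 := by
    intro x hx
    have hd := derivIoo (fun z => Complex.I * (a : ℂ) * U z + W1 z) (fun _ => 0)
      (fun z hz => hsol z (hIooIcc hz)) x hx
    rw [deriv_const] at hd
    rw [← hd]
    exact ((((hUd x).const_mul (Complex.I * (a : ℂ))).add (hW1d x)).deriv).symm
  -- differentiate h5 once more
  have h6 : ∀ x ∈ Set.Ioo (-1 : ℝ) 1, Complex.I * (a : ℂ) * U2 x + W3 x = 0 := by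
    intro x hx
    have hd := derivIoo (fun z => Complex.I * (a : ℂ) * U1 z + W2 z) (fun _ => 0) h5 x hx
    rw [deriv_const] at hd
    rw [← hd]
    exact ((((hU1d x).const_mul (Complex.I * (a : ℂ))).add (hW2d x)).deriv).symm
  -- differentiate heq2
  have h3 : ∀ x ∈ Set.Ioo (-1 : ℝ) 1, U1 x = 2 * (m : ℂ) * (W3 x - (k : ℂ) ^ 2 * W1 x) := by
    intro x hx
    have hd := derivIoo U (fun z => 2 * (m : ℂ) * (W2 z - (k : ℂ) ^ 2 * W z))
      (fun z hz => heq2 z (hIooIcc hz)) x hx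
    have hrhs : HasDerivAt (fun z => 2 * (m : ℂ) * (W2 z - (k : ℂ) ^ 2 * W z))
        (2 * (m : ℂ) * (W3 x - (k : ℂ) ^ 2 * W1 x)) x :=
      ((hW2d x).sub ((hWd x).const_mul ((k : ℂ) ^ 2))).const_mul (2 * (m : ℂ))
    rw [hrhs.deriv] at hd
    exact hd
  -- algebraic consequences on the open interval
  have hG3 : ∀ x ∈ Set.Ioo (-1 : ℝ) 1, W1 x = 4 * Complex.I * (m : ℂ) * (a : ℂ) ^ 3 * W x := by
    intro x hx
    have e1 := heq1 x (hIooIcc hx)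
    have e2 := heq2 x (hIooIcc hx)
    have e3 := h3 x hx
    have e4 := hsol x (hIooIcc hx)
    have e5 := h5 x hx
    have e6 := h6 x hx
    have hA : Complex.I * (a : ℂ) * W x = - U1 x := by
      linear_combination (Complex.I * (a : ℂ)) * e1 + (2 * (m : ℂ)) * e6
        - (2 * (m : ℂ) * (k : ℂ) ^ 2) * e4 + e3
    have hG1 : W2 x = -(a : ℂ) ^ 2 * W x := by
      linear_combination e5 - Complex.I * (a : ℂ) * hA + (a : ℂ) ^ 2 * W x * Complex.I_sq
    have hG2 : U x = -4 * (m : ℂ) * (a : ℂ) ^ 2 * W x := by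
      linear_combination e2 + 2 * (m : ℂ) * hG1 - 2 * (m : ℂ) * W x * hk'
    linear_combination e4 - Complex.I * (a : ℂ) * hG2
  -- integrating factor
  set c : ℂ := 4 * Complex.I * (m : ℂ) * (a : ℂ) ^ 3 with hc
  set g : ℝ → ℂ := fun z => W z * Complex.exp (-(c * z)) with hg
  have hgd : ∀ x : ℝ, HasDerivAt g
      (W1 x * Complex.exp (-(c * x)) + W x * (Complex.exp (-(c * x)) * -c)) x := by
    intro x
    have hid : HasDerivAt (fun z : ℝ => (z : ℂ)) 1 x := by
      simpa using (hasDerivAt_id x).ofReal_comp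
    have hexp : HasDerivAt (fun z : ℝ => Complex.exp (-(c * z)))
        (Complex.exp (-(c * x)) * -c) x := by
      have := ((hid.const_mul c).neg).cexp
      simpa [mul_comm] using this
    exact (hWd x).mul hexp
  have hderiv0 : ∀ x ∈ Set.Ico (-1 : ℝ) 1,
      derivWithin g (Set.Icc (-1 : ℝ) 1) x = 0 := by
    intro x hx
    have hW1x : W1 x = c * W x := by
      rcases eq_or_lt_of_le hx.1 with h | h
      · rw [← h]
        rw [show W1 (-1 : ℝ) = 0 from hbc.2.2.2.2.2, show W (-1 : ℝ) = 0 from hbc.2.2.2.1]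
        ring
      · exact hG3 x ⟨h, hx.2⟩
    rw [(hgd x).differentiableAt.derivWithin ((uniqueDiffOn_Icc (by norm_num : (-1:ℝ) < 1)) x
      (Set.Ico_subset_Icc_self hx)), (hgd x).deriv]
    rw [hW1x]; ring
  have hgconst := constant_of_derivWithin_zero
    (f := g) (a := (-1 : ℝ)) (b := 1)
    (fun x _ => (hgd x).differentiableAt.differentiableWithinAt) hderiv0
  have hWzero : ∀ z ∈ Set.Icc (-1 : ℝ) 1, W z = 0 := by
    intro z hz
    have h1 := hgconst z hz
    have h2 : g (-1 : ℝ) = 0 := by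
      simp only [hg, show W (-1 : ℝ) = 0 from hbc.2.2.2.1, zero_mul]
    rw [h2, hg] at h1
    rcases mul_eq_zero.mp h1 with h | h
    · exact h
    · exact absurd h (Complex.exp_ne_zero _)
  intro z hz
  have hW1z : W1 z = 0 := by
    rcases eq_or_lt_of_le hz.1 with h | h
    · rw [← h]; exact hbc.2.2.2.2.2
    · rcases eq_or_lt_of_le hz.2 with h' | h'
      · rw [h']; exact hbc.2.2.2.2.1
      · rw [hG3 z ⟨h, h'⟩, hWzero z hz]; ring
  have hUz : U z = 0 := by
    have := hsol z hz
    rw [hW1z, add_zero] at this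
    have hIa : Complex.I * (a : ℂ) ≠ 0 :=
      mul_ne_zero Complex.I_ne_zero (by exact_mod_cast ha)
    exact (mul_eq_zero.mp this).resolve_left hIa
  exact ⟨hUz, hWzero z hz⟩
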